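/- Let P be the threefold product of the standard Gaussian measure N(0,1) on ℝ. Then the pushforward of P under the map x ↦ x₁²/(x₁² + x₂² + x₃²) (defined arbitrarily at x = 0) is the measure on ℝ with density u ↦ 1/(2·√u) with respect to Lebesgue measure restricted to (0, 1], i.e., the Beta(1/2, 1) distribution. -/

import Mathlib

open MeasureTheory ProbabilityTheory

/-!
For `0 ≤ t`, `N₁² / (N₁² + N₂² + N₃²) ≤ t` iff `(1 - t) N₁² ≤ t (N₂² + N₃²)`.
In polar coordinates `N₂² + N₃²` is exponential with mean `2`, so given `N₁` this event has
probability `exp (-(1 - t) N₁² / (2t))`; the Gaussian integral `E exp (-b N₁²) = (1 + 2b)^(-1/2)`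
then gives `P = √t`, the distribution function of the density `1 / (2√u)` on `(0, 1]`.
-/

open Real Set Filter Topology
open scoped ENNReal

theorem lintegral_Ici_ofReal_exp_neg_div_two (c : ℝ) :
    ∫⁻ s in Ici c, ENNReal.ofReal (exp (-s / 2) / 2) = ENNReal.ofReal (exp (-c / 2)) := by
  have hderiv : ∀ s ∈ Ici c, HasDerivAt (fun s => -exp (-s / 2)) (exp (-s / 2) / 2) s := by
    intro s _
    exact (((hasDerivAt_neg s).div_const 2).exp).neg.congr_deriv (by ring)
  have hlim : Tendsto (fun s => -exp (-s / 2)) atTop (𝓝 (-0)) := by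
    refine (tendsto_exp_atBot.comp ?_).neg
    exact tendsto_neg_atTop_atBot.atBot_div_const two_pos
  have hpos : ∀ s ∈ Ioi c, 0 ≤ exp (-s / 2) / 2 := fun s _ => by positivity
  rw [setLIntegral_congr Ioi_ae_eq_Ici.symm,
    ← ofReal_integral_eq_lintegral_ofReal (integrableOn_Ioi_deriv_of_nonneg' hderiv hpos hlim)
      (.of_forall fun s => by positivity),
    integral_Ioi_of_hasDerivAt_of_nonneg' hderiv hpos hlim]
  simp

theorem lintegral_Ioi_ofReal_two_mul_comp_sq (F : ℝ → ℝ≥0∞) :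
    ∫⁻ r in Ioi 0, ENNReal.ofReal (2 * r) * F (r ^ 2) = ∫⁻ s in Ioi 0, F s := by
  have himage : (fun r : ℝ => r ^ 2) '' Ioi 0 = Ioi 0 := by
    ext s
    refine ⟨?_, fun hs => ⟨√s, sqrt_pos.mpr hs, sq_sqrt hs.le⟩⟩
    rintro ⟨r, hr : 0 < r, rfl⟩
    exact pow_pos hr 2
  have hinj : InjOn (fun r : ℝ => r ^ 2) (Ioi 0) :=
    fun r hr r' hr' h => (pow_left_inj₀ (le_of_lt hr) (le_of_lt hr') two_ne_zero).mp h
  conv_rhs => rw [← himage, lintegral_image_eq_lintegral_abs_deriv_mul measurableSet_Ioi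
    (fun r _ => (hasDerivAt_pow 2 r).hasDerivWithinAt) hinj]
  refine setLIntegral_congr_fun measurableSet_Ioi fun r (hr : 0 < r) => ?_
  rw [abs_of_pos (by positivity)]
  norm_num

theorem lintegral_comp_sq_add_sq {F : ℝ → ℝ≥0∞} (hF : Measurable F) :
    ∫⁻ p : ℝ × ℝ, F (p.1 ^ 2 + p.2 ^ 2) = ENNReal.ofReal π * ∫⁻ s in Ioi 0, F s := by
  have hradius : ∀ p : ℝ × ℝ, (polarCoord.symm p).1 ^ 2 + (polarCoord.symm p).2 ^ 2 = p.1 ^ 2 :=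
    fun p => by
      simp only [polarCoord_symm_apply]
      linear_combination p.1 ^ 2 * cos_sq_add_sin_sq p.2
  rw [← lintegral_comp_polarCoord_symm, ← lintegral_Ioi_ofReal_two_mul_comp_sq,
    ← lintegral_const_mul' _ _ ENNReal.ofReal_ne_top]
  simp_rw [hradius, smul_eq_mul]
  rw [polarCoord_target, Measure.volume_eq_prod, ← Measure.prod_restrict,
    lintegral_prod _ (by fun_prop)]
  simp_rw [lintegral_const, Measure.restrict_apply_univ]
  refine setLIntegral_congr_fun measurableSet_Ioi fun r (hr : 0 < r) => ?_
  rw [volume_Ioo, mul_right_comm, ← ENNReal.ofReal_mul hr.le, ← mul_assoc,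
    ← ENNReal.ofReal_mul pi_nonneg]
  ring_nf

theorem gaussianReal_prod_gaussianReal :
    (gaussianReal 0 1).prod (gaussianReal 0 1) =
      volume.withDensity fun p : ℝ × ℝ =>
        ENNReal.ofReal (exp (-(p.1 ^ 2 + p.2 ^ 2) / 2) / (2 * π)) := by
  rw [gaussianReal_of_var_ne_zero 0 one_ne_zero,
    prod_withDensity (measurable_gaussianPDF 0 1) (measurable_gaussianPDF 0 1),
    ← Measure.volume_eq_prod]
  congr with p
  rw [gaussianPDF, gaussianPDF, ← ENNReal.ofReal_mul (gaussianPDFReal_nonneg 0 1 _)]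
  congr 1
  simp only [gaussianPDFReal, NNReal.coe_one, mul_one, sub_zero]
  rw [mul_mul_mul_comm, ← mul_inv, mul_self_sqrt (by positivity), ← exp_add]
  ring_nf

theorem gaussianReal_prod_gaussianReal_setOf_le_sq_add_sq {c : ℝ} (hc : 0 ≤ c) :
    ((gaussianReal 0 1).prod (gaussianReal 0 1)) {p | c ≤ p.1 ^ 2 + p.2 ^ 2} =
      ENNReal.ofReal (exp (-c / 2)) := by
  set G : ℝ → ℝ≥0∞ := fun s => ENNReal.ofReal (exp (-s / 2) / (2 * π))
  have hset : MeasurableSet {p : ℝ × ℝ | c ≤ p.1 ^ 2 + p.2 ^ 2} :=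
    measurableSet_le measurable_const (by fun_prop)
  have hpi : ∀ s, ENNReal.ofReal π * G s = ENNReal.ofReal (exp (-s / 2) / 2) := fun s => by
    rw [← ENNReal.ofReal_mul pi_nonneg]
    congr 1
    field_simp
  rw [gaussianReal_prod_gaussianReal, withDensity_apply _ hset, ← lintegral_indicator hset]
  change ∫⁻ p : ℝ × ℝ, (Ici c).indicator G (p.1 ^ 2 + p.2 ^ 2) = _
  rw [lintegral_comp_sq_add_sq ((by fun_prop : Measurable G).indicator measurableSet_Ici),
    setLIntegral_indicator measurableSet_Ici,
    setLIntegral_congr ((ae_eq_refl (Ici c)).inter (Ioi_ae_eq_Ici (a := (0:ℝ)))),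
    Ici_inter_Ici, max_eq_left hc, ← lintegral_const_mul' _ _ ENNReal.ofReal_ne_top]
  simp_rw [hpi]
  exact lintegral_Ici_ofReal_exp_neg_div_two c

theorem lintegral_ofReal_exp_neg_mul_sq_gaussianReal {b : ℝ} (hb : 0 < 2 * b + 1) :
    ∫⁻ x, ENNReal.ofReal (exp (-b * x ^ 2)) ∂gaussianReal 0 1 =
      ENNReal.ofReal (1 / √(2 * b + 1)) := by
  have hb' : 0 < b + 1 / 2 := by linarith
  have hdensity : ∀ x, gaussianPDF 0 1 x * ENNReal.ofReal (exp (-b * x ^ 2)) =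
      ENNReal.ofReal ((√(2 * π))⁻¹ * exp (-(b + 1 / 2) * x ^ 2)) := fun x => by
    rw [gaussianPDF, ← ENNReal.ofReal_mul (gaussianPDFReal_nonneg 0 1 x)]
    simp only [gaussianPDFReal, NNReal.coe_one, mul_one, sub_zero, mul_assoc, ← exp_add]
    ring_nf
  rw [gaussianReal_of_var_ne_zero 0 one_ne_zero,
    lintegral_withDensity_eq_lintegral_mul _ (measurable_gaussianPDF 0 1) (by fun_prop)]
  simp_rw [Pi.mul_apply, hdensity]
  rw [← ofReal_integral_eq_lintegral_ofReal ((integrable_exp_neg_mul_sq hb').const_mul _)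
    (.of_forall fun x => by positivity), integral_const_mul, integral_gaussian]
  congr 1
  rw [← sqrt_inv, ← sqrt_mul (by positivity), one_div √(2 * b + 1), ← sqrt_inv]
  congr 1
  field_simp

theorem gaussianReal_prod_prod_setOf_mul_sq_le {a b : ℝ} (ha : 0 ≤ a) (hb : 0 < b) :
    ((gaussianReal 0 1).prod ((gaussianReal 0 1).prod (gaussianReal 0 1)))
        {p | a * p.1 ^ 2 ≤ b * (p.2.1 ^ 2 + p.2.2 ^ 2)} =
      ENNReal.ofReal √(b / (a + b)) := by
  have hslice : ∀ y : ℝ, ((gaussianReal 0 1).prod (gaussianReal 0 1))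
      (Prod.mk y ⁻¹' {p : ℝ × ℝ × ℝ | a * p.1 ^ 2 ≤ b * (p.2.1 ^ 2 + p.2.2 ^ 2)}) =
        ENNReal.ofReal (exp (-(a / (2 * b)) * y ^ 2)) := fun y => by
    have hpre : Prod.mk y ⁻¹' {p : ℝ × ℝ × ℝ | a * p.1 ^ 2 ≤ b * (p.2.1 ^ 2 + p.2.2 ^ 2)} =
        {q : ℝ × ℝ | a * y ^ 2 / b ≤ q.1 ^ 2 + q.2 ^ 2} := by
      ext q
      simp only [mem_preimage, mem_ofPred_eq, div_le_iff₀' hb]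
    rw [hpre, gaussianReal_prod_gaussianReal_setOf_le_sq_add_sq (by positivity)]
    congr 2
    field_simp
  rw [Measure.prod_apply (measurableSet_le (by fun_prop) (by fun_prop))]
  simp_rw [hslice]
  rw [lintegral_ofReal_exp_neg_mul_sq_gaussianReal (by positivity), one_div, ← sqrt_inv]
  congr 2
  field_simp

theorem measurePreserving_fin_three {α : Type*} [MeasurableSpace α] (μ : Measure α)
    [SigmaFinite μ] :
    MeasurePreserving (fun x : Fin 3 → α => (x 0, x 1, x 2)) (Measure.pi fun _ => μ)
      (μ.prod (μ.prod μ)) :=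
  ((MeasurePreserving.id μ).prod (measurePreserving_piFinTwo fun _ => μ)).comp
    (measurePreserving_piFinSuccAbove (fun _ : Fin 3 => μ) 0)

theorem sq_div_sq_add_sq_add_sq_le_iff {x y z t : ℝ} (ht : 0 ≤ t) :
    x ^ 2 / (x ^ 2 + y ^ 2 + z ^ 2) ≤ t ↔ (1 - t) * x ^ 2 ≤ t * (y ^ 2 + z ^ 2) := by
  rcases (by positivity : 0 ≤ x ^ 2 + y ^ 2 + z ^ 2).eq_or_lt with hzero | hpos
  · have hx : x ^ 2 = 0 := by nlinarith [sq_nonneg y, sq_nonneg z]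
    have hyz : y ^ 2 + z ^ 2 = 0 := by linarith
    simp [hx, hyz, ht]
  · rw [div_le_iff₀ hpos]
    constructor <;> intro h <;> linarith

theorem measure_pi_gaussianReal_sq_div_le (t : ℝ) :
    Measure.pi (fun _ : Fin 3 => gaussianReal 0 1)
        {x | x 0 ^ 2 / (x 0 ^ 2 + x 1 ^ 2 + x 2 ^ 2) ≤ t} = ENNReal.ofReal √(min t 1) := by
  rcases le_or_gt t 0 with ht | ht
  · rw [min_eq_left (by linarith), sqrt_eq_zero'.mpr ht, ENNReal.ofReal_zero]
    refine measure_mono_null (fun x (hx : _ ≤ t) => ?_) (Measure.pi_eval_preimage_null _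
      (gaussianReal_absolutelyContinuous 0 one_ne_zero (volume_singleton (a := 0))) (i := 0))
    simpa using (sq_div_sq_add_sq_add_sq_le_iff le_rfl).mp (hx.trans ht)
  rcases le_or_gt 1 t with ht1 | ht1
  · have huniv : {x : Fin 3 → ℝ | x 0 ^ 2 / (x 0 ^ 2 + x 1 ^ 2 + x 2 ^ 2) ≤ t} = univ :=
      eq_univ_of_forall fun x => le_trans ((sq_div_sq_add_sq_add_sq_le_iff zero_le_one).mpr
        (by simp only [sub_self, zero_mul, one_mul]; positivity)) ht1
    rw [huniv, measure_univ, min_eq_right ht1, sqrt_one, ENNReal.ofReal_one]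
  · have hpre : {x : Fin 3 → ℝ | x 0 ^ 2 / (x 0 ^ 2 + x 1 ^ 2 + x 2 ^ 2) ≤ t} =
        (fun x : Fin 3 → ℝ => (x 0, x 1, x 2)) ⁻¹'
          {p | (1 - t) * p.1 ^ 2 ≤ t * (p.2.1 ^ 2 + p.2.2 ^ 2)} := by
      ext x
      exact sq_div_sq_add_sq_add_sq_le_iff ht.le
    rw [hpre, (measurePreserving_fin_three _).measure_preimage
      (measurableSet_le (by fun_prop) (by fun_prop)).nullMeasurableSet,
      gaussianReal_prod_prod_setOf_mul_sq_le (sub_nonneg.mpr ht1.le) ht, sub_add_cancel, div_one,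
      min_eq_left ht1.le]

theorem lintegral_Ioc_ofReal_one_div_two_sqrt (t : ℝ) :
    ∫⁻ u in Ioc 0 t, ENNReal.ofReal (1 / (2 * √u)) = ENNReal.ofReal √t := by
  rcases le_or_gt t 0 with ht | ht
  · simp [Ioc_eq_empty_of_le ht, sqrt_eq_zero'.mpr ht]
  have hderiv : ∀ u ∈ Ioo 0 t, HasDerivAt (√·) (1 / (2 * √u)) u :=
    fun u hu => hasDerivAt_sqrt hu.1.ne'
  have hint : IntegrableOn (fun u => 1 / (2 * √u)) (Ioc 0 t) :=
    intervalIntegral.integrableOn_deriv_of_nonneg continuous_sqrt.continuousOn hderiv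
      fun u _ => by positivity
  rw [← ofReal_integral_eq_lintegral_ofReal hint (.of_forall fun u => by positivity),
    ← intervalIntegral.integral_of_le ht.le,
    intervalIntegral.integral_eq_sub_of_hasDerivAt_of_le ht.le continuous_sqrt.continuousOn hderiv
      ((intervalIntegrable_iff_integrableOn_Ioc_of_le ht.le).mpr hint), sqrt_zero, sub_zero]

theorem restrict_Ioc_withDensity_one_div_two_sqrt_Iic (t : ℝ) :
    ((volume : Measure ℝ).restrict (Ioc 0 1)).withDensity
        (fun u => ENNReal.ofReal (1 / (2 * √u))) (Iic t) = ENNReal.ofReal √(min t 1) := by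
  rw [withDensity_apply _ measurableSet_Iic, Measure.restrict_restrict measurableSet_Iic,
    inter_comm, Ioc_inter_Iic, lintegral_Ioc_ofReal_one_div_two_sqrt, inf_comm]

/-- Beta–Gamma step of Archimedes' theorem: if `(N₁, N₂, N₃)` are i.i.d.
standard Gaussians, then `N₁² / (N₁² + N₂² + N₃²)` has the `Beta(1/2, 1)`
distribution, i.e. density `u ↦ 1/(2√u)` w.r.t. Lebesgue measure on `(0, 1]`. -/
theorem gaussian_square_ratio_beta :
    (Measure.pi (fun _ : Fin 3 => gaussianReal 0 1)).map
        (fun x => (x 0) ^ 2 / ((x 0) ^ 2 + (x 1) ^ 2 + (x 2) ^ 2)) =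
      ((volume : Measure ℝ).restrict (Set.Ioc 0 1)).withDensity
        (fun u => ENNReal.ofReal (1 / (2 * Real.sqrt u))) := by
  have : IsFiniteMeasure (((volume : Measure ℝ).restrict (Ioc 0 1)).withDensity
      fun u => ENNReal.ofReal (1 / (2 * √u))) := ⟨by
    rw [withDensity_apply _ .univ, Measure.restrict_univ, lintegral_Ioc_ofReal_one_div_two_sqrt]
    exact ENNReal.ofReal_lt_top⟩
  refine Measure.ext_of_Iic _ _ fun t => ?_
  rw [Measure.map_apply (by fun_prop) measurableSet_Iic,
    restrict_Ioc_withDensity_one_div_two_sqrt_Iic]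
  exact measure_pi_gaussianReal_sq_div_le t
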